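/- Let M = [[−a, A₁₂],[A₁₂ᵀ, A₂₂]] with A₂₂ invertible, K = [[−a, B₁₂],[B₁₂ᵀ, B₂₂]] with B₂₂ invertible, and let g = (−a − B₁₂ B₂₂^{-1} B₁₂ᵀ) be the scalar reciprocal Cauchy transform of K. Consider the matrix C obtained from M by attaching K at vertex 1: C = [[−a, A₁₂, B₁₂],[A₁₂ᵀ, A₂₂, 0],[B₁₂ᵀ, 0, B₂₂]]. Then the Schur complement of C onto its first 1+m block equals the matrix M with its (1,1) entry −a replaced by g; in particular (C^{-1})_{11} = (M')^{-1}_{11} where M' = [[g, A₁₂],[A₁₂ᵀ, A₂₂]], assuming the relevant matrices are invertible. -/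

import Mathlib

/-! Attaching `K` at vertex 1 only couples the first row and column of `M` to the new block,
so the Schur complement of `B₂₂` in `C` changes `M` just at the `(1,1)` entry, by
`-B₁₂ B₂₂⁻¹ B₁₂ᵀ`. The top-left block of `C⁻¹` is the inverse of that Schur complement. -/

namespace Matrix

variable {R l l' n n' p q : Type*}

lemma fromRows_zero_mul_mul_fromCols_zero [Semiring R] [Fintype n] [Fintype n']
    (u : Matrix l n R) (D : Matrix n n' R) (v : Matrix n' l' R) :
    fromRows u (0 : Matrix p n R) * D * fromCols v (0 : Matrix n' q R) =
      fromBlocks (u * D * v) 0 0 0 := by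
  rw [fromRows_mul, fromRows_mul_fromCols]
  simp

lemma fromBlocks_sub_fromBlocks_zero [AddGroup R] (A S : Matrix l l' R) (B : Matrix l q R)
    (C : Matrix p l' R) (D : Matrix p q R) :
    fromBlocks A B C D - fromBlocks S 0 0 0 = fromBlocks (A - S) B C D := by
  ext (i | i) (j | j) <;> simp

lemma toBlocks₁₁_inv_fromBlocks_of_isUnit₂₂ [CommRing R] [Fintype n] [DecidableEq n]
    [Fintype p] [DecidableEq p] {A : Matrix n n R} {B : Matrix n p R} {C : Matrix p n R}
    {D : Matrix p p R} (hD : IsUnit D) (h : IsUnit (fromBlocks A B C D)) :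
    (fromBlocks A B C D)⁻¹.toBlocks₁₁ = (A - B * D⁻¹ * C)⁻¹ := by
  let := hD.invertible
  let := h.invertible
  let := invertibleOfFromBlocks₂₂Invertible A B C D
  simp only [← invOf_eq_nonsing_inv, invOf_fromBlocks₂₂_eq, toBlocks_fromBlocks₁₁]

end Matrix

open Matrix in
theorem stmt_7_general (m k : ℕ) (a : ℂ)
    (A12 : Matrix (Fin 1) (Fin m) ℂ) (A22 : Matrix (Fin m) (Fin m) ℂ)
    (B12 : Matrix (Fin 1) (Fin k) ℂ) (B22 : Matrix (Fin k) (Fin k) ℂ) (hB22 : IsUnit B22)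
    (g : ℂ) (hg : g = -a - (B12 * B22⁻¹ * B12.transpose) 0 0)
    (M M' : Matrix (Fin 1 ⊕ Fin m) (Fin 1 ⊕ Fin m) ℂ)
    (hMdef : M = Matrix.fromBlocks (Matrix.of fun _ _ => -a) A12 A12.transpose A22)
    (hM'def : M' = Matrix.fromBlocks (Matrix.of fun _ _ => g) A12 A12.transpose A22)
    (C : Matrix ((Fin 1 ⊕ Fin m) ⊕ Fin k) ((Fin 1 ⊕ Fin m) ⊕ Fin k) ℂ)
    (hCdef : C = Matrix.fromBlocks M (Matrix.fromRows B12 0)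
      (Matrix.fromCols B12.transpose 0) B22) :
    M - Matrix.fromRows B12 0 * B22⁻¹ * Matrix.fromCols B12.transpose 0 = M' ∧
      (IsUnit C → IsUnit M' →
        (C⁻¹) (Sum.inl (Sum.inl 0)) (Sum.inl (Sum.inl 0)) = (M'⁻¹) (Sum.inl 0) (Sum.inl 0)) := by
  have hSchur : M - fromRows B12 0 * B22⁻¹ * fromCols B12ᵀ 0 = M' := by
    rw [fromRows_zero_mul_mul_fromCols_zero, hMdef, hM'def, fromBlocks_sub_fromBlocks_zero, hg]
    congr 1
    ext i j
    simp [Subsingleton.elim i 0, Subsingleton.elim j 0]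
  refine ⟨hSchur, fun hC _ => ?_⟩
  subst hCdef
  rw [← hSchur, ← toBlocks₁₁_inv_fromBlocks_of_isUnit₂₂ hB22 hC]
  rfl

/-- Graph retraction: attaching `K = [[-a, B₁₂],[B₁₂ᵀ, B₂₂]]` to the matrix
`M = [[-a, A₁₂],[A₁₂ᵀ, A₂₂]]` at vertex 1 yields `C` whose Schur complement onto the
first block is `M'`, the matrix `M` with `(1,1)` entry replaced by the reciprocal
Cauchy transform `g` of `K`; in particular `(C⁻¹)₁₁ = (M'⁻¹)₁₁`. -/
theorem stmt_7 (m k : ℕ) (a : ℂ)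
    (A12 : Matrix (Fin 1) (Fin m) ℂ) (A22 : Matrix (Fin m) (Fin m) ℂ) (hA22 : IsUnit A22)
    (B12 : Matrix (Fin 1) (Fin k) ℂ) (B22 : Matrix (Fin k) (Fin k) ℂ) (hB22 : IsUnit B22)
    (g : ℂ) (hg : g = -a - (B12 * B22⁻¹ * B12.transpose) 0 0)
    (M M' : Matrix (Fin 1 ⊕ Fin m) (Fin 1 ⊕ Fin m) ℂ)
    (hMdef : M = Matrix.fromBlocks (Matrix.of fun _ _ => -a) A12 A12.transpose A22)
    (hM'def : M' = Matrix.fromBlocks (Matrix.of fun _ _ => g) A12 A12.transpose A22)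
    (C : Matrix ((Fin 1 ⊕ Fin m) ⊕ Fin k) ((Fin 1 ⊕ Fin m) ⊕ Fin k) ℂ)
    (hCdef : C = Matrix.fromBlocks M (Matrix.fromRows B12 0)
      (Matrix.fromCols B12.transpose 0) B22) :
    M - Matrix.fromRows B12 0 * B22⁻¹ * Matrix.fromCols B12.transpose 0 = M' ∧
      (IsUnit C → IsUnit M' →
        (C⁻¹) (Sum.inl (Sum.inl 0)) (Sum.inl (Sum.inl 0)) = (M'⁻¹) (Sum.inl 0) (Sum.inl 0)) :=
  stmt_7_general m k a A12 A22 B12 B22 hB22 g hg M M' hMdef hM'def C hCdef
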